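/- arXiv:2311.03582 — 3 statements merged into one kernel-verified Lean document; each statement's English description precedes it below -/
import Mathlib

section
/- Let V0 ∈ L^∞(0,1) and define F0(x) := ∫₀ˣ V0(z)dz for 0 ≤ x ≤ 1. Then proj_K(V0) = 0 in L²(0,1) if and only if F0(1) = 0 and F0(x) ≥ 0 for all x ∈ [0,1]. -/
open MeasureTheory Set Filter
open scoped RealInnerProductSpace Topology

/-- Lebesgue measure restricted to the interval `(0,1)`; `L²(0,1)` is `Lp ℝ 2 μ01`. -/
noncomputable def μ01 : Measure ℝ := volume.restrict (Set.Ioo 0 1)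

/-- `K` is the set of elements of `L²(0,1)` admitting a nondecreasing representative
on `(0,1)`; it is a nonempty closed convex cone. -/
def K01 : Set (Lp ℝ 2 μ01) :=
  {f | ∃ g : ℝ → ℝ, MonotoneOn g (Set.Ioo 0 1) ∧ (f : ℝ → ℝ) =ᵐ[μ01] g}

instance : IsFiniteMeasure μ01 := by
  constructor
  simp [μ01, Real.volume_Ioo]

namespace NullProjAux

lemma mu01_Ioc : μ01 = volume.restrict (Set.Ioc 0 1) := by
  rw [μ01, Measure.restrict_congr_set Ioo_ae_eq_Ioc]

lemma ae_mem01 : ∀ᵐ x ∂μ01, x ∈ Set.Ioo (0:ℝ) 1 := by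
  rw [μ01]; exact ae_restrict_mem measurableSet_Ioo

lemma mu01_singleton (t : ℝ) : μ01 {t} = 0 := by
  rw [μ01, Measure.restrict_apply (measurableSet_singleton t)]
  exact measure_mono_null inter_subset_left (measure_singleton t)

lemma ae_ne (t : ℝ) : ∀ᵐ x ∂μ01, x ≠ t := by
  refine ae_iff.2 ?_
  have : {a : ℝ | ¬ a ≠ t} = {t} := by ext a; simp
  rw [this]; exact mu01_singleton t

lemma V0integrable (V : Lp ℝ 2 μ01) : Integrable (V : ℝ → ℝ) μ01 :=
  (Lp.memLp V).integrable one_le_two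

lemma V0intervalIntegrable (V : Lp ℝ 2 μ01) :
    IntervalIntegrable (V : ℝ → ℝ) volume 0 1 := by
  rw [intervalIntegrable_iff, uIoc_of_le (zero_le_one' ℝ)]
  have h : IntegrableOn (V : ℝ → ℝ) (Set.Ioo 0 1) volume := V0integrable V
  exact h.congr_set_ae Ioo_ae_eq_Ioc.symm

lemma integral01_eq (V : Lp ℝ 2 μ01) :
    ∫ x, (V : ℝ → ℝ) x ∂μ01 = ∫ z in (0:ℝ)..1, (V : ℝ → ℝ) z := by
  rw [intervalIntegral.integral_of_le (zero_le_one' ℝ),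
    ← setIntegral_congr_set (μ := volume) (f := (V : ℝ → ℝ)) Ioo_ae_eq_Ioc]
  rfl

lemma integral_Ioi (V : Lp ℝ 2 μ01) {t : ℝ} (ht : t ∈ Set.Icc (0:ℝ) 1) :
    ∫ x in Set.Ioi t, (V : ℝ → ℝ) x ∂μ01
      = (∫ z in (0:ℝ)..1, (V : ℝ → ℝ) z) - ∫ z in (0:ℝ)..t, (V : ℝ → ℝ) z := by
  have hI : IntervalIntegrable (V : ℝ → ℝ) volume 0 1 := V0intervalIntegrable V
  have hI' : IntervalIntegrable (V : ℝ → ℝ) volume 0 t :=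
    hI.mono_set (Set.uIcc_subset_uIcc (by simp) (by simpa [Set.uIcc_of_le (zero_le_one' ℝ)] using ht))
  have hsub : (∫ z in (0:ℝ)..1, (V : ℝ → ℝ) z) - ∫ z in (0:ℝ)..t, (V : ℝ → ℝ) z
      = ∫ z in t..(1:ℝ), (V : ℝ → ℝ) z :=
    intervalIntegral.integral_interval_sub_left hI hI'
  rw [hsub, intervalIntegral.integral_of_le ht.2, integral_Ioc_eq_integral_Ioo]
  have h1 : Set.Ioi t ∩ Set.Ioo 0 1 = Set.Ioo t 1 := by
    ext x
    constructor
    · rintro ⟨hx1, _, hx3⟩; exact ⟨hx1, hx3⟩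
    · rintro ⟨hx1, hx2⟩; exact ⟨hx1, lt_of_le_of_lt ht.1 hx1, hx2⟩
  have hrr : μ01.restrict (Set.Ioi t) = volume.restrict (Set.Ioo t 1) := by
    rw [μ01, Measure.restrict_restrict measurableSet_Ioi, h1]
  rw [hrr]

lemma upper_rep (g : ℝ → ℝ) (hg : MonotoneOn g (Set.Ioo 0 1)) (c : ℝ) :
    ∃ t ∈ Set.Icc (0:ℝ) 1, ∀ᵐ x ∂μ01,
      {y | c ≤ g y}.indicator (fun _ => (1:ℝ)) x
        = (Set.Ioi t).indicator (fun _ => (1:ℝ)) x := by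
  set T := {y ∈ Set.Ioo (0:ℝ) 1 | c ≤ g y} with hT
  by_cases hne : T.Nonempty
  · have hbd : BddBelow T := ⟨0, fun y hy => hy.1.1.le⟩
    refine ⟨sInf T, ⟨le_csInf hne fun y hy => hy.1.1.le, ?_⟩, ?_⟩
    · obtain ⟨y, hy⟩ := hne
      exact (csInf_le hbd hy).trans hy.1.2.le
    · filter_upwards [ae_mem01, ae_ne (sInf T)] with x hx hxt
      rcases lt_or_gt_of_ne hxt with hlt | hgt
      · have hxS : x ∉ {y | c ≤ g y} := by
          intro hc
          exact absurd (csInf_le hbd ⟨hx, hc⟩) (not_le.2 hlt)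
        rw [Set.indicator_of_notMem hxS,
          Set.indicator_of_notMem (by simpa using not_lt.2 hlt.le)]
      · obtain ⟨y, hyT, hyx⟩ := (csInf_lt_iff hbd hne).1 hgt
        have hcx : x ∈ {y | c ≤ g y} := hyT.2.trans (hg hyT.1 hx hyx.le)
        rw [Set.indicator_of_mem hcx, Set.indicator_of_mem (Set.mem_Ioi.2 hgt)]
  · refine ⟨1, ⟨zero_le_one, le_rfl⟩, ?_⟩
    filter_upwards [ae_mem01] with x hx
    have hxS : x ∉ {y | c ≤ g y} := fun hc => hne ⟨x, hx, hc⟩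
    rw [Set.indicator_of_notMem hxS,
      Set.indicator_of_notMem (by simpa using hx.2.le)]

lemma ind_term (V : Lp ℝ 2 μ01)
    (h1 : (∫ z in (0:ℝ)..1, (V : ℝ → ℝ) z) = 0)
    (hnn : ∀ x ∈ Set.Icc (0:ℝ) 1, 0 ≤ ∫ z in (0:ℝ)..x, (V : ℝ → ℝ) z)
    (g : ℝ → ℝ) (hg : MonotoneOn g (Set.Ioo 0 1)) (c : ℝ) :
    Integrable (fun x => (V : ℝ → ℝ) x * {y | c ≤ g y}.indicator (fun _ => (1:ℝ)) x) μ01 ∧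
    ∫ x, (V : ℝ → ℝ) x * {y | c ≤ g y}.indicator (fun _ => (1:ℝ)) x ∂μ01 ≤ 0 := by
  obtain ⟨t, ht, heq⟩ := upper_rep g hg c
  have hae : (fun x => (V : ℝ → ℝ) x * {y | c ≤ g y}.indicator (fun _ => (1:ℝ)) x)
      =ᵐ[μ01] fun x => (Set.Ioi t).indicator (V : ℝ → ℝ) x := by
    filter_upwards [heq] with x hx
    rw [hx]
    by_cases h : x ∈ Set.Ioi t
    · rw [Set.indicator_of_mem h, Set.indicator_of_mem h, mul_one]
    · rw [Set.indicator_of_notMem h, Set.indicator_of_notMem h, mul_zero]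
  have hi : Integrable (fun x => (Set.Ioi t).indicator (V : ℝ → ℝ) x) μ01 :=
    (V0integrable V).indicator measurableSet_Ioi
  refine ⟨hi.congr hae.symm, ?_⟩
  rw [integral_congr_ae hae, integral_indicator measurableSet_Ioi, integral_Ioi V ht, h1,
    zero_sub]
  exact neg_nonpos.2 (hnn t ht)

/-- The step approximation of `g` at level `n`. -/
noncomputable def approx (g : ℝ → ℝ) (n : ℕ) (x : ℝ) : ℝ :=
  ((2:ℝ)^n)⁻¹ * ∑ k ∈ Finset.range (2*(n*2^n)),
    {y | ((k:ℝ) + 1 - (n:ℝ)*2^n)/((2:ℝ)^n) ≤ g y}.indicator (fun _ => (1:ℝ)) x - n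

lemma count_eq (n : ℕ) (z : ℝ) :
    (∑ k ∈ Finset.range (2*(n*2^n)),
      if ((k:ℝ) + 1 - (n:ℝ)*2^n)/((2:ℝ)^n) ≤ z then (1:ℝ) else 0)
      = ((min (2*(n*2^n)) ⌊(2:ℝ)^n * z + (n:ℝ)*2^n⌋₊ : ℕ) : ℝ) := by
  have hP : (0:ℝ) < 2^n := by positivity
  set r : ℝ := (2:ℝ)^n * z + (n:ℝ)*2^n with hr
  have hcond : ∀ k : ℕ, (((k:ℝ) + 1 - (n:ℝ)*2^n)/((2:ℝ)^n) ≤ z ↔ k < ⌊r⌋₊) := by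
    intro k
    rw [div_le_iff₀ hP]
    constructor
    · intro h
      have hk1 : ((k+1 : ℕ) : ℝ) ≤ r := by push_cast; nlinarith
      have := Nat.le_floor hk1
      omega
    · intro h
      have h0 : (0:ℝ) ≤ r := by
        by_contra h2
        rw [Nat.floor_of_nonpos (le_of_not_ge h2)] at h
        omega
      have h1 : ((k+1 : ℕ) : ℝ) ≤ (⌊r⌋₊ : ℝ) := by exact_mod_cast h
      have h2 := Nat.floor_le h0
      push_cast at h1
      nlinarith
  have hsum : (∑ k ∈ Finset.range (2*(n*2^n)),
      if ((k:ℝ) + 1 - (n:ℝ)*2^n)/((2:ℝ)^n) ≤ z then (1:ℝ) else 0)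
      = ∑ k ∈ Finset.range (2*(n*2^n)), if k < ⌊r⌋₊ then (1:ℝ) else 0 :=
    Finset.sum_congr rfl fun k _ => by rw [if_congr (hcond k) rfl rfl]
  rw [hsum, Finset.sum_boole]
  have hfil : (Finset.range (2*(n*2^n))).filter (fun k => k < ⌊r⌋₊)
      = Finset.range (min (2*(n*2^n)) ⌊r⌋₊) := by
    ext k
    simp only [Finset.mem_filter, Finset.mem_range, Nat.lt_min]
    all_goals omega
  rw [hfil, Finset.card_range]

lemma approx_eq (g : ℝ → ℝ) (n : ℕ) (x : ℝ) :
    approx g n x = ((2:ℝ)^n)⁻¹ *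
      ((min (2*(n*2^n)) ⌊(2:ℝ)^n * g x + (n:ℝ)*2^n⌋₊ : ℕ) : ℝ) - n := by
  unfold approx
  rw [← count_eq]
  congr 2
  all_goals
    refine Finset.sum_congr rfl fun k _ => ?_
    simp only [Set.indicator_apply, Set.mem_setOf_eq]

lemma approx_facts (g : ℝ → ℝ) (n : ℕ) (x : ℝ) :
    |approx g n x| ≤ |g x| + 1 ∧
      (|g x| < (n:ℝ) → |approx g n x - g x| ≤ ((2:ℝ)^n)⁻¹) := by
  have hP : (0:ℝ) < 2^n := by positivity
  have hP1 : (1:ℝ) ≤ 2^n := one_le_pow₀ (by norm_num)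
  have hPinv : (0:ℝ) < ((2:ℝ)^n)⁻¹ := by positivity
  have hPinv1 : ((2:ℝ)^n)⁻¹ ≤ 1 := by
    rw [inv_le_one_iff₀]; right; exact hP1
  rw [approx_eq]
  set r : ℝ := (2:ℝ)^n * g x + (n:ℝ)*2^n with hr
  have hN : ((2*(n*2^n) : ℕ) : ℝ) = 2*(n:ℝ)*2^n := by push_cast; ring
  rcases le_or_gt (n:ℝ) (g x) with hA | hB
  · -- g x ≥ n : approx = n
    have h2N : ((2*(n*2^n) : ℕ) : ℝ) ≤ r := by rw [hN, hr]; nlinarith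
    have hm : 2*(n*2^n) ≤ ⌊r⌋₊ := Nat.le_floor h2N
    rw [min_eq_left hm]
    have hval : ((2:ℝ)^n)⁻¹ * ((2*(n*2^n) : ℕ) : ℝ) - n = n := by
      rw [hN]; field_simp; try ring
    rw [hval]
    constructor
    · rw [abs_of_nonneg (Nat.cast_nonneg n)]
      exact (hA.trans (le_abs_self _)).trans (by linarith)
    · intro h
      exact absurd hA (not_le.2 (lt_of_abs_lt h))
  · -- g x < n
    have hrlt : r < ((2*(n*2^n) : ℕ) : ℝ) := by rw [hN, hr]; nlinarith
    have hm2N : ⌊r⌋₊ ≤ 2*(n*2^n) := by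
      rcases le_or_gt 0 r with h0 | h0
      · have h2 := Nat.floor_le h0
        have h3 : ((⌊r⌋₊ : ℕ) : ℝ) < ((2*(n*2^n) : ℕ) : ℝ) := lt_of_le_of_lt h2 hrlt
        exact_mod_cast h3.le
      · rw [Nat.floor_of_nonpos h0.le]; omega
    rw [min_eq_right hm2N]
    rcases le_or_gt 0 r with h0 | h0
    · have hml : ((⌊r⌋₊ : ℕ) : ℝ) ≤ r := Nat.floor_le h0
      have hmu : r < ((⌊r⌋₊ : ℕ) : ℝ) + 1 := Nat.lt_floor_add_one r
      have hPr : ((2:ℝ)^n)⁻¹ * r = g x + n := by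
        rw [hr]; field_simp; try ring
      have hle : ((2:ℝ)^n)⁻¹ * ((⌊r⌋₊ : ℕ) : ℝ) ≤ ((2:ℝ)^n)⁻¹ * r :=
        mul_le_mul_of_nonneg_left hml hPinv.le
      have hgt : ((2:ℝ)^n)⁻¹ * r < ((2:ℝ)^n)⁻¹ * (((⌊r⌋₊ : ℕ) : ℝ) + 1) :=
        mul_lt_mul_of_pos_left hmu hPinv
      have hexp : ((2:ℝ)^n)⁻¹ * (((⌊r⌋₊ : ℕ) : ℝ) + 1)
          = ((2:ℝ)^n)⁻¹ * ((⌊r⌋₊ : ℕ) : ℝ) + ((2:ℝ)^n)⁻¹ := by ring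
      have hval_le : ((2:ℝ)^n)⁻¹ * ((⌊r⌋₊ : ℕ) : ℝ) - n ≤ g x := by linarith
      have hval_gt : g x - ((2:ℝ)^n)⁻¹ < ((2:ℝ)^n)⁻¹ * ((⌊r⌋₊ : ℕ) : ℝ) - n := by
        rw [hexp] at hgt; linarith
      constructor
      · rw [abs_le]
        constructor
        · have := neg_abs_le (g x); linarith
        · have := le_abs_self (g x); linarith
      · intro _
        rw [abs_le]
        constructor <;> linarith
    · -- r < 0 : approx = −n and g x < −n
      have hm0 : ⌊r⌋₊ = 0 := Nat.floor_of_nonpos h0.le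
      have hgx : g x < -(n:ℝ) := by
        have : (2:ℝ)^n * g x < -((n:ℝ)*2^n) := by rw [hr] at h0; linarith
        nlinarith
      rw [hm0]
      simp only [Nat.cast_zero, mul_zero, zero_sub]
      have habs : (n:ℝ) ≤ |g x| := by
        rw [abs_of_nonpos (by nlinarith [Nat.cast_nonneg (α := ℝ) n] : g x ≤ 0)]
        linarith
      constructor
      · rw [abs_neg, abs_of_nonneg (Nat.cast_nonneg n)]; linarith
      · intro h
        exact absurd habs (not_le.2 h)

lemma approx_tendsto (g : ℝ → ℝ) (x : ℝ) :
    Tendsto (fun n => approx g n x) atTop (𝓝 (g x)) := by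
  rw [← tendsto_sub_nhds_zero_iff]
  apply squeeze_zero_norm' (a := fun n => ((2:ℝ)^n)⁻¹)
  · obtain ⟨n0, hn0⟩ := exists_nat_gt (|g x|)
    rw [eventually_atTop]
    refine ⟨n0, fun n hn => ?_⟩
    have : |g x| < (n:ℝ) := hn0.trans_le (by exact_mod_cast hn)
    simpa [Real.norm_eq_abs] using (approx_facts g n x).2 this
  · exact tendsto_inv_atTop_zero.comp (tendsto_pow_atTop_atTop_of_one_lt one_lt_two)

set_option maxHeartbeats 1000000 in
/-- The central analytic estimate: the pairing of `V` against any monotone `L²`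
function is nonpositive, provided the primitive of `V` is nonnegative with total
integral zero. -/
lemma mul_monotone_integral_nonpos (V : Lp ℝ 2 μ01)
    (C : ℝ) (hC : ∀ᵐ x ∂μ01, |(V : ℝ → ℝ) x| ≤ C)
    (h1 : (∫ z in (0:ℝ)..1, (V : ℝ → ℝ) z) = 0)
    (hnn : ∀ x ∈ Set.Icc (0:ℝ) 1, 0 ≤ ∫ z in (0:ℝ)..x, (V : ℝ → ℝ) z)
    (g : ℝ → ℝ) (hg : MonotoneOn g (Set.Ioo 0 1)) (hgL : MemLp g 2 μ01) :
    ∫ x, (V : ℝ → ℝ) x * g x ∂μ01 ≤ 0 := by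
  have hgi : Integrable g μ01 := hgL.integrable one_le_two
  have hVi : Integrable (V : ℝ → ℝ) μ01 := V0integrable V
  have hV01 : ∫ x, (V : ℝ → ℝ) x ∂μ01 = 0 := by rw [integral01_eq V, h1]
  have hterm := fun (n k : ℕ) =>
    ind_term V h1 hnn g hg (((k:ℝ) + 1 - (n:ℝ)*2^n)/((2:ℝ)^n))
  have hFn_eq : ∀ n : ℕ, (fun x => (V : ℝ → ℝ) x * approx g n x)
      = fun x => ((2:ℝ)^n)⁻¹ * (∑ k ∈ Finset.range (2*(n*2^n)),
          (V : ℝ → ℝ) x * {y | ((k:ℝ) + 1 - (n:ℝ)*2^n)/((2:ℝ)^n) ≤ g y}.indicator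
            (fun _ => (1:ℝ)) x) - (n:ℝ) * (V : ℝ → ℝ) x := by
    intro n
    funext x
    simp only [approx]
    rw [← Finset.mul_sum]
    ring
  have hsum_int : ∀ n : ℕ, Integrable (fun x => ∑ k ∈ Finset.range (2*(n*2^n)),
      (V : ℝ → ℝ) x * {y | ((k:ℝ) + 1 - (n:ℝ)*2^n)/((2:ℝ)^n) ≤ g y}.indicator
        (fun _ => (1:ℝ)) x) μ01 :=
    fun n => integrable_finset_sum _ fun k _ => (hterm n k).1
  have hFn_int : ∀ n, Integrable (fun x => (V : ℝ → ℝ) x * approx g n x) μ01 := by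
    intro n
    rw [hFn_eq n]
    exact ((hsum_int n).const_mul _).sub (hVi.const_mul _)
  have hFn_le : ∀ n, ∫ x, (V : ℝ → ℝ) x * approx g n x ∂μ01 ≤ 0 := by
    intro n
    rw [hFn_eq n, integral_sub ((hsum_int n).const_mul _) (hVi.const_mul _),
      integral_const_mul, integral_const_mul, hV01,
      integral_finset_sum _ (fun k _ => (hterm n k).1)]
    have hs : (∑ k ∈ Finset.range (2*(n*2^n)), ∫ x, (V : ℝ → ℝ) x *
        {y | ((k:ℝ) + 1 - (n:ℝ)*2^n)/((2:ℝ)^n) ≤ g y}.indicator (fun _ => (1:ℝ)) x ∂μ01)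
        ≤ 0 := Finset.sum_nonpos fun k _ => (hterm n k).2
    have h2 : (0:ℝ) ≤ ((2:ℝ)^n)⁻¹ := by positivity
    nlinarith
  have hbound_int : Integrable (fun x => (max C 0) * (|g x| + 1)) μ01 :=
    (hgi.abs.add (integrable_const 1)).const_mul _
  have hbd : ∀ n : ℕ, ∀ᵐ x ∂μ01,
      ‖(V : ℝ → ℝ) x * approx g n x‖ ≤ (max C 0) * (|g x| + 1) := by
    intro n
    filter_upwards [hC] with x hx
    rw [Real.norm_eq_abs, abs_mul]
    exact mul_le_mul (hx.trans (le_max_left C 0)) (approx_facts g n x).1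
      (abs_nonneg _) (le_max_right C 0)
  have hlim : ∀ᵐ x ∂μ01, Tendsto (fun n => (V : ℝ → ℝ) x * approx g n x) atTop
      (𝓝 ((V : ℝ → ℝ) x * g x)) :=
    Eventually.of_forall fun x => (approx_tendsto g x).const_mul _
  have hT := tendsto_integral_of_dominated_convergence _
    (fun n => (hFn_int n).1) hbound_int hbd hlim
  exact le_of_tendsto' hT hFn_le

/-! ### Elements of the cone -/

lemma inner_eq (V k : Lp ℝ 2 μ01) :
    ⟪V, k⟫ = ∫ x, (V : ℝ → ℝ) x * (k : ℝ → ℝ) x ∂μ01 := by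
  rw [MeasureTheory.L2.inner_def]
  simp [RCLike.inner_apply, starRingEnd_apply]
  exact integral_congr_ae (Eventually.of_forall fun x => mul_comm _ _)

lemma zero_mem : (0 : Lp ℝ 2 μ01) ∈ K01 :=
  ⟨fun _ => 0, monotoneOn_const, by exact Lp.coeFn_zero ℝ 2 μ01⟩

lemma smul_mem {c : ℝ} (hc : 0 ≤ c) {k : Lp ℝ 2 μ01} (hk : k ∈ K01) :
    c • k ∈ K01 := by
  obtain ⟨g, hgmono, hgae⟩ := hk
  refine ⟨fun x => c * g x, fun a ha b hb hab =>
    mul_le_mul_of_nonneg_left (hgmono ha hb hab) hc, ?_⟩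
  filter_upwards [Lp.coeFn_smul c k, hgae] with x hx1 hx2
  rw [hx1, Pi.smul_apply, smul_eq_mul, hx2]

/-- The constant function as an element of `L²(0,1)`. -/
noncomputable def constLp (c : ℝ) : Lp ℝ 2 μ01 :=
  indicatorConstLp 2 MeasurableSet.univ (measure_ne_top μ01 Set.univ) c

lemma constLp_coe (c : ℝ) : (constLp c : ℝ → ℝ) =ᵐ[μ01] fun _ => c := by
  have h := indicatorConstLp_coeFn
    (p := 2) (hs := MeasurableSet.univ) (hμs := measure_ne_top μ01 Set.univ) (c := c)
  filter_upwards [h] with x hx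
  rw [Set.indicator_univ] at hx
  exact hx

lemma constLp_mem (c : ℝ) : constLp c ∈ K01 :=
  ⟨fun _ => c, monotoneOn_const, constLp_coe c⟩

lemma inner_constLp (V : Lp ℝ 2 μ01) (c : ℝ) :
    ⟪V, constLp c⟫ = (∫ x, (V : ℝ → ℝ) x ∂μ01) * c := by
  rw [inner_eq, ← integral_mul_const]
  refine integral_congr_ae ?_
  filter_upwards [constLp_coe c] with x hx
  rw [hx]

/-- The indicator of `(t, ∞)` as an element of `L²(0,1)`. -/
noncomputable def indLp (t : ℝ) : Lp ℝ 2 μ01 :=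
  indicatorConstLp 2 measurableSet_Ioi (measure_ne_top μ01 (Set.Ioi t)) (1:ℝ)

lemma indLp_coe (t : ℝ) :
    (indLp t : ℝ → ℝ) =ᵐ[μ01] (Set.Ioi t).indicator (fun _ => (1:ℝ)) :=
  indicatorConstLp_coeFn

lemma indLp_mem (t : ℝ) : indLp t ∈ K01 := by
  refine ⟨(Set.Ioi t).indicator (fun _ => (1:ℝ)), ?_, indLp_coe t⟩
  intro a _ b _ hab
  by_cases ha : a ∈ Set.Ioi t
  · rw [Set.indicator_of_mem ha, Set.indicator_of_mem (Set.mem_Ioi.2 (ha.trans_le hab))]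
  · rw [Set.indicator_of_notMem ha]
    by_cases hb : b ∈ Set.Ioi t
    · rw [Set.indicator_of_mem hb]; norm_num
    · rw [Set.indicator_of_notMem hb]

lemma inner_indLp (V : Lp ℝ 2 μ01) {t : ℝ} (ht : t ∈ Set.Icc (0:ℝ) 1) :
    ⟪V, indLp t⟫ = (∫ z in (0:ℝ)..1, (V : ℝ → ℝ) z) - ∫ z in (0:ℝ)..t, (V : ℝ → ℝ) z := by
  rw [inner_eq, ← integral_Ioi V ht, ← integral_indicator measurableSet_Ioi]
  refine integral_congr_ae ?_
  filter_upwards [indLp_coe t] with x hx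
  rw [hx]
  by_cases h : x ∈ Set.Ioi t
  · rw [Set.indicator_of_mem h, Set.indicator_of_mem h, mul_one]
  · rw [Set.indicator_of_notMem h, Set.indicator_of_notMem h, mul_zero]

/-! ### Projection characterization -/

lemma inner_nonpos_of_proj_zero
    (proj : Lp ℝ 2 μ01 → Lp ℝ 2 μ01)
    (hprojnear : ∀ u, ∀ k ∈ K01, ‖u - proj u‖ ≤ ‖u - k‖)
    (V0 : Lp ℝ 2 μ01) (hp : proj V0 = 0)
    (k : Lp ℝ 2 μ01) (hk : k ∈ K01) : ⟪V0, k⟫ ≤ 0 := by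
  have key : ∀ c : ℝ, 0 < c → ⟪V0, k⟫ ≤ c * ‖k‖^2 / 2 := by
    intro c hc
    have h2 := hprojnear V0 (c • k) (smul_mem hc.le hk)
    rw [hp, sub_zero] at h2
    have h3 : ‖V0‖^2 ≤ ‖V0 - c • k‖^2 := pow_le_pow_left₀ (norm_nonneg _) h2 2
    rw [norm_sub_sq_real, real_inner_smul_right, norm_smul, Real.norm_eq_abs,
      abs_of_pos hc] at h3
    nlinarith
  by_contra hcon
  push_neg at hcon
  have hk0 : k ≠ 0 := by
    intro h
    rw [h, inner_zero_right] at hcon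
    exact lt_irrefl 0 hcon
  have hknorm : 0 < ‖k‖ := norm_pos_iff.2 hk0
  have hc : 0 < ⟪V0, k⟫ / ‖k‖^2 := div_pos hcon (by positivity)
  have := key _ hc
  have heq : ⟪V0, k⟫ / ‖k‖^2 * ‖k‖^2 / 2 = ⟪V0, k⟫ / 2 := by
    field_simp
  rw [heq] at this
  linarith

lemma proj_zero_of_inner_nonpos
    (proj : Lp ℝ 2 μ01 → Lp ℝ 2 μ01)
    (hprojmem : ∀ u, proj u ∈ K01)
    (hprojnear : ∀ u, ∀ k ∈ K01, ‖u - proj u‖ ≤ ‖u - k‖)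
    (V0 : Lp ℝ 2 μ01)
    (hin : ∀ k ∈ K01, ⟪V0, k⟫ ≤ 0) : proj V0 = 0 := by
  have h0 : ∀ k ∈ K01, ‖V0‖ ≤ ‖V0 - k‖ := by
    intro k hk
    have h := hin k hk
    have hsq : ‖V0‖^2 ≤ ‖V0 - k‖^2 := by
      rw [norm_sub_sq_real]
      nlinarith [sq_nonneg ‖k‖]
    exact (pow_le_pow_iff_left₀ (norm_nonneg _) (norm_nonneg _) two_ne_zero).1 hsq
  set p := proj V0 with hpdef
  have hpK : p ∈ K01 := hprojmem V0
  have e1 : ‖V0 - p‖ = ‖V0‖ :=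
    le_antisymm (by simpa using hprojnear V0 0 zero_mem) (h0 p hpK)
  have e2 : ‖V0 - p‖ ≤ ‖V0 - (2⁻¹:ℝ) • p‖ :=
    hprojnear V0 _ (smul_mem (by norm_num) hpK)
  have e2sq : ‖V0 - p‖^2 ≤ ‖V0 - (2⁻¹:ℝ) • p‖^2 :=
    pow_le_pow_left₀ (norm_nonneg _) e2 2
  have e1sq : ‖V0‖^2 - 2*⟪V0, p⟫ + ‖p‖^2 = ‖V0‖^2 := by
    rw [← norm_sub_sq_real, e1]
  rw [norm_sub_sq_real, norm_sub_sq_real, real_inner_smul_right, norm_smul,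
    Real.norm_eq_abs] at e2sq
  have habs : |(2⁻¹:ℝ)| = 2⁻¹ := by norm_num
  rw [habs] at e2sq
  have hexp : ((2⁻¹:ℝ) * ‖p‖)^2 = ‖p‖^2 / 4 := by ring
  rw [hexp] at e2sq
  have hpsq : ‖p‖^2 ≤ 0 := by linarith
  have hpn : ‖p‖ = 0 := le_antisymm (by nlinarith [norm_nonneg p]) (norm_nonneg p)
  rw [hpdef] at hpn ⊢
  exact norm_eq_zero.1 hpn

end NullProjAux

open NullProjAux

/-- Let `V0 ∈ L^∞(0,1)` and define `F0 x := ∫₀ˣ V0(z) dz` for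
`0 ≤ x ≤ 1`.  Then `proj_K V0 = 0` if and only if `F0 1 = 0` and
`F0 x ≥ 0` for all `x ∈ [0,1]`. -/
theorem null_projection_iff_nonneg_primitive
    (proj : Lp ℝ 2 μ01 → Lp ℝ 2 μ01)
    (hprojmem : ∀ u, proj u ∈ K01)
    (hprojnear : ∀ u, ∀ k ∈ K01, ‖u - proj u‖ ≤ ‖u - k‖)
    (V0 : Lp ℝ 2 μ01)
    (hV0bdd : ∃ C : ℝ, ∀ᵐ x ∂μ01, |(V0 : ℝ → ℝ) x| ≤ C)
    (F0 : ℝ → ℝ)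
    (hF0 : ∀ x ∈ Set.Icc (0:ℝ) 1, F0 x = ∫ z in (0:ℝ)..x, (V0 : ℝ → ℝ) z) :
    proj V0 = 0 ↔ (F0 1 = 0 ∧ ∀ x ∈ Set.Icc (0:ℝ) 1, 0 ≤ F0 x) := by
  have hF01 : F0 1 = ∫ z in (0:ℝ)..1, (V0 : ℝ → ℝ) z := hF0 1 ⟨zero_le_one, le_rfl⟩
  constructor
  · intro hp
    have hin : ∀ k ∈ K01, ⟪V0, k⟫ ≤ 0 :=
      inner_nonpos_of_proj_zero proj hprojnear V0 hp
    have hc1 := hin (constLp 1) (constLp_mem 1)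
    have hc2 := hin (constLp (-1)) (constLp_mem (-1))
    rw [inner_constLp] at hc1 hc2
    have hint0 : ∫ x, (V0 : ℝ → ℝ) x ∂μ01 = 0 := by linarith
    have hint0' : (∫ z in (0:ℝ)..1, (V0 : ℝ → ℝ) z) = 0 := by
      rw [← integral01_eq V0]; exact hint0
    refine ⟨by rw [hF01]; exact hint0', ?_⟩
    intro x hx
    have hix := hin (indLp x) (indLp_mem x)
    rw [inner_indLp V0 hx, hint0', zero_sub, neg_nonpos] at hix
    rw [hF0 x hx]
    exact hix
  · rintro ⟨h1, hnn⟩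
    obtain ⟨C, hC⟩ := hV0bdd
    have h1' : (∫ z in (0:ℝ)..1, (V0 : ℝ → ℝ) z) = 0 := by rw [← hF01]; exact h1
    have hnn' : ∀ x ∈ Set.Icc (0:ℝ) 1, 0 ≤ ∫ z in (0:ℝ)..x, (V0 : ℝ → ℝ) z := by
      intro x hx
      rw [← hF0 x hx]
      exact hnn x hx
    refine proj_zero_of_inner_nonpos proj hprojmem hprojnear V0 ?_
    intro k hk
    obtain ⟨g, hgmono, hgae⟩ := hk
    have hgL : MemLp g 2 μ01 := (Lp.memLp k).ae_eq hgae
    rw [inner_eq]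
    have : (fun x => (V0 : ℝ → ℝ) x * (k : ℝ → ℝ) x)
        =ᵐ[μ01] fun x => (V0 : ℝ → ℝ) x * g x := by
      filter_upwards [hgae] with x hx
      rw [hx]
    rw [integral_congr_ae this]
    exact mul_monotone_integral_nonpos V0 C hC h1' hnn' g hgmono hgL
end

section
/- Let N0 ∈ K, V0 ∈ L^∞(0,1), and set N(t) := proj_K(N0 + t·V0) for t ≥ 0. Assume that for each x ∈ [0,1] one has inf_{t ≥ 0} ∫₀ˣ N(t,z)dz > −∞, and that sup_{t ≥ 0} ∫₀¹ N(t,x)dx < ∞. Then proj_K(V0) = 0. -/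
open MeasureTheory

instance : IsProbabilityMeasure μ01 := by
  constructor
  simp [μ01, Real.volume_Ioo]

lemma K01_smul {t : ℝ} (ht : 0 ≤ t) {f : Lp ℝ 2 μ01} (hf : f ∈ K01) : t • f ∈ K01 := by
  obtain ⟨g, hg, hfg⟩ := hf
  refine ⟨fun x => t * g x, fun a ha b hb hab => mul_le_mul_of_nonneg_left (hg ha hb hab) ht, ?_⟩
  filter_upwards [Lp.coeFn_smul t f, hfg] with x h1 h2
  simp only [h1, Pi.smul_apply, smul_eq_mul, h2]

lemma K01_convex : Convex ℝ K01 := by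
  intro f hf g hg a b ha hb _
  obtain ⟨gf, hgf, hf'⟩ := hf
  obtain ⟨gg, hgg, hg'⟩ := hg
  refine ⟨fun x => a * gf x + b * gg x, ?_, ?_⟩
  · intro x hx y hy hxy
    have h1 := hgf hx hy hxy
    have h2 := hgg hx hy hxy
    have := mul_le_mul_of_nonneg_left h1 ha
    have := mul_le_mul_of_nonneg_left h2 hb
    dsimp only
    linarith
  · filter_upwards [Lp.coeFn_add (a • f) (b • g), Lp.coeFn_smul a f, Lp.coeFn_smul b g,
      hf', hg'] with x h1 h2 h3 h4 h5
    simp only [h1, Pi.add_apply, h2, h3, Pi.smul_apply, smul_eq_mul, h4, h5]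

set_option maxHeartbeats 1000000 in
lemma proj_vi {u v : Lp ℝ 2 μ01} (hv : v ∈ K01)
    (hnear : ∀ k ∈ K01, ‖u - v‖ ≤ ‖u - k‖) :
    ∀ k ∈ K01, (inner ℝ (u - v) (k - v) : ℝ) ≤ 0 := by
  have hne : Nonempty K01 := ⟨⟨v, hv⟩⟩
  have h : ‖u - v‖ = ⨅ w : K01, ‖u - w‖ := by
    apply le_antisymm
    · exact le_ciInf fun w => hnear w w.2
    · refine ciInf_le (f := fun w : K01 => ‖u - (w : Lp ℝ 2 μ01)‖) ?_ ⟨v, hv⟩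
      refine ⟨0, ?_⟩
      rintro x ⟨w, rfl⟩
      positivity
  exact (norm_eq_iInf_iff_real_inner_le_zero K01_convex hv).1 h

lemma proj_lip {u₁ u₂ v₁ v₂ : Lp ℝ 2 μ01} (h1 : v₁ ∈ K01) (h2 : v₂ ∈ K01)
    (n1 : ∀ k ∈ K01, ‖u₁ - v₁‖ ≤ ‖u₁ - k‖) (n2 : ∀ k ∈ K01, ‖u₂ - v₂‖ ≤ ‖u₂ - k‖) :
    ‖v₁ - v₂‖ ≤ ‖u₁ - u₂‖ := by
  have a1 := proj_vi h1 n1 v₂ h2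
  have a2 := proj_vi h2 n2 v₁ h1
  have e1 : (inner ℝ (u₁ - v₁) (v₂ - v₁) : ℝ) = -(inner ℝ (u₁ - v₁) (v₁ - v₂) : ℝ) := by
    rw [← inner_neg_right]; congr 1; abel
  have e2 : (inner ℝ ((u₁ - v₁) - (u₂ - v₂)) (v₁ - v₂) : ℝ)
      = (inner ℝ (u₁ - v₁) (v₁ - v₂) : ℝ) - (inner ℝ (u₂ - v₂) (v₁ - v₂) : ℝ) := inner_sub_left _ _ _
  have e3 : (u₁ - v₁) - (u₂ - v₂) = (u₁ - u₂) - (v₁ - v₂) := by abel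
  have e4 : (inner ℝ ((u₁ - u₂) - (v₁ - v₂)) (v₁ - v₂) : ℝ)
      = (inner ℝ (u₁ - u₂) (v₁ - v₂) : ℝ) - (inner ℝ (v₁ - v₂) (v₁ - v₂) : ℝ) := inner_sub_left _ _ _
  have e5 : (inner ℝ (v₁ - v₂) (v₁ - v₂) : ℝ) = ‖v₁ - v₂‖ ^ 2 := real_inner_self_eq_norm_sq _
  have hkey : ‖v₁ - v₂‖ ^ 2 ≤ (inner ℝ (u₁ - u₂) (v₁ - v₂) : ℝ) := by
    rw [e3, e4] at e2
    linarith
  have hcs : (inner ℝ (u₁ - u₂) (v₁ - v₂) : ℝ) ≤ ‖u₁ - u₂‖ * ‖v₁ - v₂‖ := real_inner_le_norm _ _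
  rcases eq_or_lt_of_le (norm_nonneg (v₁ - v₂)) with h | h
  · rw [← h]; exact norm_nonneg _
  · nlinarith

lemma abs_setIntegral_le_norm (f : Lp ℝ 2 μ01) (s : Set ℝ) :
    |∫ x in s, (f : ℝ → ℝ) x ∂μ01| ≤ ‖f‖ := by
  have hint : Integrable (f : ℝ → ℝ) μ01 := (Lp.memLp f).integrable one_le_two
  have h1 : |∫ x in s, (f : ℝ → ℝ) x ∂μ01| ≤ ∫ x in s, |(f : ℝ → ℝ) x| ∂μ01 := by
    simpa [Real.norm_eq_abs] using
      norm_integral_le_integral_norm (μ := μ01.restrict s) (f : ℝ → ℝ)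
  have h2 : (∫ x in s, |(f : ℝ → ℝ) x| ∂μ01) ≤ ∫ x, |(f : ℝ → ℝ) x| ∂μ01 :=
    setIntegral_le_integral hint.abs (Filter.Eventually.of_forall fun x => abs_nonneg _)
  have h3 : (∫ x, |(f : ℝ → ℝ) x| ∂μ01) ≤ ‖f‖ := by
    rw [Lp.norm_def]
    have e1 : ∫ x, |(f : ℝ → ℝ) x| ∂μ01 = (eLpNorm (f : ℝ → ℝ) 1 μ01).toReal := by
      rw [eLpNorm_one_eq_lintegral_enorm]
      simpa [Real.norm_eq_abs] using integral_norm_eq_lintegral_enorm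
        (Lp.aestronglyMeasurable f)
    rw [e1]
    exact ENNReal.toReal_mono (Lp.eLpNorm_ne_top f)
      (eLpNorm_le_eLpNorm_of_exponent_le one_le_two (Lp.aestronglyMeasurable f))
  linarith

/-- Let `N0 ∈ K`, `V0 ∈ L^∞(0,1)`, set `N t := proj_K (N0 + t • V0)`
for `t ≥ 0`.  Assume that for each `x ∈ [0,1]` one has
`inf_{t ≥ 0} ∫₀ˣ N(t,z) dz > −∞` and `sup_{t ≥ 0} ∫₀¹ N(t,x) dx < ∞`.
Then `proj_K V0 = 0`. -/
theorem null_projection_of_bounded_primitives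
    (proj : Lp ℝ 2 μ01 → Lp ℝ 2 μ01)
    (hprojmem : ∀ u, proj u ∈ K01)
    (hprojnear : ∀ u, ∀ k ∈ K01, ‖u - proj u‖ ≤ ‖u - k‖)
    (N0 V0 : Lp ℝ 2 μ01) (hN0K : N0 ∈ K01)
    (hV0bdd : ∃ C : ℝ, ∀ᵐ x ∂μ01, |(V0 : ℝ → ℝ) x| ≤ C)
    (N : ℝ → Lp ℝ 2 μ01)
    (hN : ∀ t : ℝ, 0 ≤ t → N t = proj (N0 + t • V0))
    (hinf : ∀ x ∈ Set.Icc (0:ℝ) 1,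
      ∃ m : ℝ, ∀ t : ℝ, 0 ≤ t → m ≤ ∫ z in (0:ℝ)..x, (N t : ℝ → ℝ) z)
    (hsup : ∃ Mb : ℝ, ∀ t : ℝ, 0 ≤ t → (∫ x in (0:ℝ)..1, (N t : ℝ → ℝ) x) ≤ Mb) :
    proj V0 = 0 := by
  set P := proj V0 with hPdef
  obtain ⟨g, hg, hPg⟩ := hprojmem V0
  set C := ‖N0‖ with hCdef
  -- key bound: ‖N t - t • P‖ ≤ ‖N0‖ for t > 0
  have key : ∀ t : ℝ, 0 < t → ‖N t - t • P‖ ≤ C := by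
    intro t ht
    have hmem2 : t • P ∈ K01 := K01_smul ht.le (hprojmem V0)
    have n2 : ∀ k ∈ K01, ‖t • V0 - t • P‖ ≤ ‖t • V0 - k‖ := by
      intro k hk
      have hk' : t⁻¹ • k ∈ K01 := K01_smul (by positivity) hk
      have hnear := hprojnear V0 _ hk'
      have e1 : ‖t • V0 - t • P‖ = t * ‖V0 - P‖ := by
        rw [← smul_sub, norm_smul, Real.norm_eq_abs, abs_of_pos ht]
      have e2 : ‖t • V0 - k‖ = t * ‖V0 - t⁻¹ • k‖ := by
        rw [← norm_smul_of_nonneg ht.le, smul_sub, smul_inv_smul₀ ht.ne']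
      rw [e1, e2]
      exact mul_le_mul_of_nonneg_left hnear ht.le
    have hlip := proj_lip (hprojmem (N0 + t • V0)) hmem2 (hprojnear (N0 + t • V0)) n2
    rw [hN t ht.le]
    calc ‖proj (N0 + t • V0) - t • P‖ ≤ ‖(N0 + t • V0) - t • V0‖ := hlip
      _ = C := by rw [hCdef]; congr 1; abel
  -- rewriting the interval integral as a set integral over μ01
  have hmeas_eq : ∀ x ∈ Set.Icc (0:ℝ) 1,
      μ01.restrict (Set.Ioo 0 x) = volume.restrict (Set.Ioo 0 x) := by
    intro x hx
    show (volume.restrict (Set.Ioo 0 1)).restrict (Set.Ioo 0 x) = _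
    rw [Measure.restrict_restrict measurableSet_Ioo,
      Set.inter_eq_left.mpr (Set.Ioo_subset_Ioo le_rfl hx.2)]
  have hiconv : ∀ x ∈ Set.Icc (0:ℝ) 1, ∀ f : Lp ℝ 2 μ01,
      (∫ z in (0:ℝ)..x, (f : ℝ → ℝ) z) = ∫ z in Set.Ioo 0 x, (f : ℝ → ℝ) z ∂μ01 := by
    intro x hx f
    rw [intervalIntegral.integral_of_le hx.1, integral_Ioc_eq_integral_Ioo]
    exact (congrArg (fun m => ∫ z, (f : ℝ → ℝ) z ∂m) (hmeas_eq x hx)).symm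
  -- decomposition of the integral of N t
  have hPint : Integrable (P : ℝ → ℝ) μ01 := (Lp.memLp P).integrable one_le_two
  have hdecomp : ∀ t : ℝ, 0 < t → ∀ x ∈ Set.Icc (0:ℝ) 1,
      (∫ z in Set.Ioo 0 x, (N t : ℝ → ℝ) z ∂μ01)
      = (∫ z in Set.Ioo 0 x, ((N t - t • P : Lp ℝ 2 μ01) : ℝ → ℝ) z ∂μ01)
        + t * ∫ z in Set.Ioo 0 x, (P : ℝ → ℝ) z ∂μ01 := by
    intro t ht x hx
    have h1 : (N t : ℝ → ℝ) =ᵐ[μ01]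
        fun z => ((N t - t • P : Lp ℝ 2 μ01) : ℝ → ℝ) z + t * (P : ℝ → ℝ) z := by
      filter_upwards [Lp.coeFn_sub (N t) (t • P), Lp.coeFn_smul t P] with z h1 h2
      simp only [h1, Pi.sub_apply, h2, Pi.smul_apply, smul_eq_mul]
      ring
    have hint1 : Integrable ((N t - t • P : Lp ℝ 2 μ01) : ℝ → ℝ) μ01 :=
      (Lp.memLp _).integrable one_le_two
    rw [integral_congr_ae (ae_restrict_of_ae h1),
      integral_add hint1.restrict ((hPint.const_mul t).restrict),
      integral_const_mul]
  -- Claim A : ∀ x ∈ [0,1], 0 ≤ ∫_{(0,x)} P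
  have claimA : ∀ x ∈ Set.Icc (0:ℝ) 1, 0 ≤ ∫ z in Set.Ioo 0 x, (P : ℝ → ℝ) z ∂μ01 := by
    intro x hx
    obtain ⟨m, hm⟩ := hinf x hx
    set Ix := ∫ z in Set.Ioo 0 x, (P : ℝ → ℝ) z ∂μ01 with hIx
    have bound : ∀ t : ℝ, 0 < t → m ≤ C + t * Ix := by
      intro t ht
      have h0 := hm t ht.le
      rw [hiconv x hx, hdecomp t ht x hx] at h0
      have habs := abs_setIntegral_le_norm (N t - t • P) (Set.Ioo 0 x)
      have := key t ht
      have := abs_le.1 habs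
      linarith [this.2]
    by_contra hneg
    push_neg at hneg
    have h1 := bound 1 one_pos
    have hnum : m - C - 1 < 0 := by linarith
    have ht : 0 < (m - C - 1) / Ix := div_pos_of_neg_of_neg hnum hneg
    have h2 := bound _ ht
    have : (m - C - 1) / Ix * Ix = m - C - 1 := div_mul_cancel₀ _ hneg.ne
    linarith
  -- Claim B : ∫_{(0,1)} P ≤ 0
  have claimB : (∫ z in Set.Ioo 0 1, (P : ℝ → ℝ) z ∂μ01) ≤ 0 := by
    obtain ⟨Mb, hMb⟩ := hsup
    have h01 : (1 : ℝ) ∈ Set.Icc (0:ℝ) 1 := by norm_num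
    set I1 := ∫ z in Set.Ioo 0 1, (P : ℝ → ℝ) z ∂μ01 with hI1
    have bound : ∀ t : ℝ, 0 < t → -C + t * I1 ≤ Mb := by
      intro t ht
      have h0 := hMb t ht.le
      rw [hiconv 1 h01, hdecomp t ht 1 h01] at h0
      have habs := abs_setIntegral_le_norm (N t - t • P) (Set.Ioo 0 1)
      have := key t ht
      have := abs_le.1 habs
      linarith [this.1]
    by_contra hpos
    push_neg at hpos
    have h1 := bound 1 one_pos
    have hnum : 0 < Mb + C + 1 := by linarith
    have ht : 0 < (Mb + C + 1) / I1 := div_pos hnum hpos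
    have h2 := bound _ ht
    have : (Mb + C + 1) / I1 * I1 = Mb + C + 1 := div_mul_cancel₀ _ hpos.ne'
    linarith
  -- transfer to g
  have hgint : Integrable g μ01 := hPint.congr hPg
  have hIg : ∀ x ∈ Set.Icc (0:ℝ) 1,
      (∫ z in Set.Ioo 0 x, (P : ℝ → ℝ) z ∂μ01) = ∫ z in Set.Ioo 0 x, g z := by
    intro x hx
    rw [integral_congr_ae (ae_restrict_of_ae hPg)]
    exact congrArg (fun m => ∫ z, g z ∂m) (hmeas_eq x hx)
  have hgon : ∀ x ∈ Set.Icc (0:ℝ) 1, IntegrableOn g (Set.Ioo 0 x) volume := by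
    intro x hx
    have := hgint.restrict (s := Set.Ioo 0 x)
    rwa [hmeas_eq x hx] at this
  -- g vanishes on (0,1)
  have hg0 : ∀ x ∈ Set.Ioo (0:ℝ) 1, g x = 0 := by
    intro x hx
    have hxIcc : x ∈ Set.Icc (0:ℝ) 1 := Set.Ioo_subset_Icc_self hx
    have h1Icc : (1:ℝ) ∈ Set.Icc (0:ℝ) 1 := by norm_num
    have hA : (0:ℝ) ≤ ∫ z in Set.Ioo 0 x, g z := by
      have := claimA x hxIcc; rwa [hIg x hxIcc] at this
    have hB : (∫ z in Set.Ioo 0 1, g z) ≤ 0 := by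
      have := claimB; rwa [hIg 1 h1Icc] at this
    -- upper bound part: ∫_{(0,x)} g ≤ x * g x
    have hup : (∫ z in Set.Ioo 0 x, g z) ≤ x * g x := by
      have hmono : ∀ z ∈ Set.Ioo (0:ℝ) x, g z ≤ g x := by
        intro z hz
        exact hg ⟨hz.1, hz.2.trans hx.2⟩ hx (hz.2.le)
      calc (∫ z in Set.Ioo 0 x, g z) ≤ ∫ _ in Set.Ioo (0:ℝ) x, g x :=
            setIntegral_mono_on (hgon x hxIcc) (integrableOn_const (by simp [Real.volume_Ioo])) measurableSet_Ioo hmono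
        _ = x * g x := by
            simp [Real.volume_Ioo, ENNReal.toReal_ofReal hx.1.le, sub_zero, hx.1.le]
    -- lower bound part on [x,1)
    have hIco : IntegrableOn g (Set.Ico x 1) volume := by
      have hsub : Set.Ico x 1 ⊆ Set.Ioo 0 1 := fun z hz => ⟨lt_of_lt_of_le hx.1 hz.1, hz.2⟩
      have := hgint.restrict (s := Set.Ico x 1)
      have hmeq : μ01.restrict (Set.Ico x 1) = volume.restrict (Set.Ico x 1) := by
        show (volume.restrict (Set.Ioo 0 1)).restrict (Set.Ico x 1) = _
        rw [Measure.restrict_restrict measurableSet_Ico, Set.inter_eq_left.mpr hsub]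
      rwa [hmeq] at this
    have hsplit : (∫ z in Set.Ioo 0 1, g z)
        = (∫ z in Set.Ioo 0 x, g z) + ∫ z in Set.Ico x 1, g z := by
      rw [← setIntegral_union ?_ measurableSet_Ico (hgon x hxIcc) hIco]
      · rw [Set.Ioo_union_Ico_eq_Ioo hx.1 hx.2.le]
      · rw [Set.disjoint_left]
        intro z hz1 hz2
        exact absurd hz2.1 (not_le.2 hz1.2)
    have hlow : (1 - x) * g x ≤ ∫ z in Set.Ico x 1, g z := by
      have hmono : ∀ z ∈ Set.Ico x 1, g x ≤ g z := by
        intro z hz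
        exact hg hx ⟨lt_of_lt_of_le hx.1 hz.1, hz.2⟩ hz.1
      calc (1 - x) * g x = ∫ _ in Set.Ico x 1, g x := by
            simp [Real.volume_Ico, ENNReal.toReal_ofReal (by linarith [hx.2] : (0:ℝ) ≤ 1 - x), hx.2.le]
        _ ≤ ∫ z in Set.Ico x 1, g z :=
            setIntegral_mono_on (integrableOn_const (by simp [Real.volume_Ico])) hIco measurableSet_Ico hmono
    have hxpos := hx.1
    have hx1 : (0:ℝ) < 1 - x := by linarith [hx.2]
    have hgx_nonneg : 0 ≤ g x := nonneg_of_mul_nonneg_right (by linarith) hxpos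
    have hgx_nonpos : g x ≤ 0 := by nlinarith
    linarith
  -- conclude P = 0
  have hP0 : (P : ℝ → ℝ) =ᵐ[μ01] ((0 : Lp ℝ 2 μ01) : ℝ → ℝ) := by
    have hmem : ∀ᵐ z ∂μ01, z ∈ Set.Ioo (0:ℝ) 1 := ae_restrict_mem measurableSet_Ioo
    filter_upwards [hPg, hmem, Lp.coeFn_zero ℝ 2 μ01] with z h1 h2 h3
    rw [h1, hg0 z h2, h3]
    rfl
  exact Lp.ext hP0
end

section
/- Let ω : [0,∞) → [0,∞) be nonincreasing with ∫₀^∞ ω(s)ds < ∞ and ∫₀^∞ s·ω(s)² ds < ∞. Then for every t ≥ 0, 2∫_t^∞ (s − t)·ω(s)² ds ≤ (∫_t^∞ ω(s)ds)². -/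
open MeasureTheory

/-- **Lemma 3.9.** For any nonincreasing, nonnegative `ω` on `[0,∞)`
satisfying the necessary integrability conditions,
`2 ∫_t^∞ (s − t) ω(s)² ds ≤ (∫_t^∞ ω(s) ds)²` for all `t ≥ 0`. -/
theorem nonincreasing_tail_inequality
    (ω : ℝ → ℝ)
    (hω_nonneg : ∀ s ∈ Set.Ici (0:ℝ), 0 ≤ ω s)
    (hω_anti : AntitoneOn ω (Set.Ici 0))
    (hint1 : IntegrableOn ω (Set.Ici 0))
    (hint2 : IntegrableOn (fun s => s * ω s ^ 2) (Set.Ici 0)) :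
    ∀ t : ℝ, 0 ≤ t →
      2 * (∫ s in Set.Ioi t, (s - t) * ω s ^ 2) ≤ (∫ s in Set.Ioi t, ω s) ^ 2 := by
  intro t ht
  have hsub : Set.Ioi t ⊆ Set.Ici (0:ℝ) := fun x hx => le_trans ht (le_of_lt hx)
  have hIocsub : ∀ s : ℝ, Set.Ioc t s ⊆ Set.Ici (0:ℝ) :=
    fun s x hx => le_trans ht (le_of_lt hx.1)
  have hωInt : IntegrableOn ω (Set.Ioi t) := hint1.mono_set hsub
  have hωm : AEStronglyMeasurable ω (volume.restrict (Set.Ioi t)) := hωInt.1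
  set F : ℝ := ∫ s in Set.Ioi t, ω s with hF
  set G : ℝ → ℝ := fun s => ∫ u in Set.Ioc t s, ω u with hG
  have hGnonneg : ∀ s, 0 ≤ G s := fun s =>
    setIntegral_nonneg measurableSet_Ioc (fun x hx => hω_nonneg x (hIocsub s hx))
  have hGmono : Monotone G := by
    intro a b hab
    exact setIntegral_mono_set (hint1.mono_set (hIocsub b))
      (ae_restrict_of_forall_mem measurableSet_Ioc (fun x hx => hω_nonneg x (hIocsub b hx)))
      (HasSubset.Subset.eventuallyLE (Set.Ioc_subset_Ioc_right hab))
  have hGleF : ∀ s, G s ≤ F := by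
    intro s
    exact setIntegral_mono_set hωInt
      (ae_restrict_of_forall_mem measurableSet_Ioi (fun x hx => hω_nonneg x (hsub hx)))
      (HasSubset.Subset.eventuallyLE (Set.Ioc_subset_Ioi_self))
  have hFnonneg : 0 ≤ F :=
    setIntegral_nonneg measurableSet_Ioi (fun x hx => hω_nonneg x (hsub hx))
  -- integrability of G * ω on Ioi t
  have hGωm : AEStronglyMeasurable (fun s => G s * ω s) (volume.restrict (Set.Ioi t)) :=
    (hGmono.measurable.aestronglyMeasurable).mul hωm
  have hGωInt : IntegrableOn (fun s => G s * ω s) (Set.Ioi t) := by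
    refine Integrable.mono' (hωInt.const_mul F) hGωm ?_
    refine (ae_restrict_iff' measurableSet_Ioi).2 (Filter.Eventually.of_forall fun s hs => ?_)
    have h1 : 0 ≤ ω s := hω_nonneg s (hsub hs)
    have h2 : 0 ≤ G s * ω s := mul_nonneg (hGnonneg s) h1
    rw [Real.norm_eq_abs, abs_of_nonneg h2]
    exact mul_le_mul_of_nonneg_right (hGleF s) h1
  -- integrability of (s - t) * ω s ^ 2 on Ioi t
  have hω2Int : IntegrableOn (fun s => ω s ^ 2) (Set.Ioi t) := by
    refine Integrable.mono' (hωInt.const_mul (ω t)) (hωm.mul hωm |>.congr ?_) ?_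
    · exact Filter.Eventually.of_forall fun s => (sq (ω s)).symm
    · refine (ae_restrict_iff' measurableSet_Ioi).2 (Filter.Eventually.of_forall fun s hs => ?_)
      have h1 : 0 ≤ ω s := hω_nonneg s (hsub hs)
      have h2 : ω s ≤ ω t := hω_anti (Set.mem_Ici.2 ht) (hsub hs) (le_of_lt hs)
      rw [Real.norm_eq_abs, abs_of_nonneg (sq_nonneg _), sq]
      exact mul_le_mul_of_nonneg_right h2 h1
  have hLInt : IntegrableOn (fun s => (s - t) * ω s ^ 2) (Set.Ioi t) := by
    have := (hint2.mono_set hsub).sub (hω2Int.const_mul t)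
    exact this.congr (Filter.Eventually.of_forall fun s => by simp only [Pi.sub_apply]; ring)
  -- pointwise bound : (s - t) * ω s ≤ G s for s > t
  have hpw : ∀ s ∈ Set.Ioi t, (s - t) * ω s ^ 2 ≤ G s * ω s := by
    intro s hs
    have hωs : 0 ≤ ω s := hω_nonneg s (hsub hs)
    have hkey : (s - t) * ω s ≤ G s := by
      have hconst : (∫ _ in Set.Ioc t s, ω s) ≤ G s := by
        refine setIntegral_mono_on (integrableOn_const ?_)
          (hint1.mono_set (hIocsub s)) measurableSet_Ioc ?_
        · rw [Real.volume_Ioc]; exact ENNReal.ofReal_ne_top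
        · intro x hx
          exact hω_anti (hIocsub s hx) (hsub hs) hx.2
      rw [setIntegral_const, Real.volume_real_Ioc_of_le (by linarith [Set.mem_Ioi.1 hs]),
        smul_eq_mul] at hconst
      exact hconst
    calc (s - t) * ω s ^ 2 = ((s - t) * ω s) * ω s := by ring
      _ ≤ G s * ω s := mul_le_mul_of_nonneg_right hkey hωs
  have hstep1 : (∫ s in Set.Ioi t, (s - t) * ω s ^ 2) ≤ ∫ s in Set.Ioi t, G s * ω s :=
    setIntegral_mono_on hLInt hGωInt measurableSet_Ioi hpw
  -- Fubini symmetrization : 2 * ∫ G ω = F ^ 2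
  set ω₀ : ℝ → ℝ := (Set.Ioi t).indicator ω with hω₀
  have hω₀Int : Integrable ω₀ :=
    (integrable_indicator_iff measurableSet_Ioi).2 hωInt
  have hω₀nn : ∀ x, 0 ≤ ω₀ x := fun x =>
    Set.indicator_nonneg (fun y hy => hω_nonneg y (hsub hy)) x
  have hω₀eq : ∀ x ∈ Set.Ioi t, ω₀ x = ω x := fun x hx => Set.indicator_of_mem hx ω
  set R : Set (ℝ × ℝ) := {p : ℝ × ℝ | t < p.2 ∧ p.2 ≤ p.1} with hR
  have hRmeas : MeasurableSet R := by
    apply MeasurableSet.inter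
    · exact measurableSet_lt measurable_const measurable_snd
    · exact measurableSet_le measurable_snd measurable_fst
  set f : ℝ × ℝ → ℝ := R.indicator (fun p => ω₀ p.2 * ω₀ p.1) with hf
  have hfm : AEStronglyMeasurable f (volume.prod volume) :=
    ((hω₀Int.1.comp_snd.mul hω₀Int.1.comp_fst)).indicator hRmeas
  have hfInt : Integrable f (volume.prod volume) := by
    refine Integrable.mono' (hω₀Int.mul_prod hω₀Int) hfm
      (Filter.Eventually.of_forall fun p => ?_)
    rw [Real.norm_eq_abs]
    by_cases hp : p ∈ R
    · rw [hf, Set.indicator_of_mem hp, abs_of_nonneg (mul_nonneg (hω₀nn _) (hω₀nn _)),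
        mul_comm]
    · rw [hf, Set.indicator_of_notMem hp, abs_zero]
      exact mul_nonneg (hω₀nn _) (hω₀nn _)
  have hswap : (∫ v, ∫ u, f (v, u)) = ∫ u, ∫ v, f (v, u) :=
    integral_integral_swap hfInt
  -- compute left iterated integral
  have hinner1 : ∀ v : ℝ, (∫ u, f (v, u)) =
      (Set.Ioi t).indicator (fun v => G v * ω v) v := by
    intro v
    have hfeq : ∀ u, f (v, u) = (Set.Ioc t v).indicator (fun u => ω₀ u * ω₀ v) u := by
      intro u
      rw [hf]
      by_cases hu : u ∈ Set.Ioc t v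
      · rw [Set.indicator_of_mem hu, Set.indicator_of_mem (show (v, u) ∈ R from ⟨hu.1, hu.2⟩)]
      · rw [Set.indicator_of_notMem hu,
          Set.indicator_of_notMem (show (v, u) ∉ R from fun h => hu ⟨h.1, h.2⟩)]
    simp_rw [hfeq]
    rw [integral_indicator measurableSet_Ioc, integral_mul_const]
    by_cases hv : v ∈ Set.Ioi t
    · rw [Set.indicator_of_mem hv, hω₀eq v hv]
      congr 1
      exact setIntegral_congr_fun measurableSet_Ioc
        (fun x hx => hω₀eq x (Set.Ioc_subset_Ioi_self hx))
    · rw [Set.indicator_of_notMem hv, Set.Ioc_eq_empty (fun h => hv h),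
        Measure.restrict_empty, integral_zero_measure, zero_mul]
  -- compute right iterated integral
  have hinner2 : ∀ u : ℝ, (∫ v, f (v, u)) =
      (Set.Ioi t).indicator (fun u => (∫ x in Set.Ici u, ω x) * ω u) u := by
    intro u
    by_cases hu : u ∈ Set.Ioi t
    · have hfeq : ∀ v, f (v, u) = (Set.Ici u).indicator (fun v => ω₀ u * ω₀ v) v := by
        intro v
        rw [hf]
        by_cases hv : v ∈ Set.Ici u
        · rw [Set.indicator_of_mem hv,
            Set.indicator_of_mem (show (v, u) ∈ R from ⟨hu, hv⟩)]
        · rw [Set.indicator_of_notMem hv,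
            Set.indicator_of_notMem (show (v, u) ∉ R from fun h => hv h.2)]
      simp_rw [hfeq]
      rw [integral_indicator measurableSet_Ici, integral_const_mul,
        Set.indicator_of_mem hu, hω₀eq u hu, mul_comm]
      congr 1
      exact setIntegral_congr_fun measurableSet_Ici
        (fun x hx => hω₀eq x (Set.mem_Ioi.2 (lt_of_lt_of_le hu hx)))
    · have hfeq : ∀ v, f (v, u) = 0 := by
        intro v
        rw [hf, Set.indicator_of_notMem (show (v, u) ∉ R from fun h => hu h.1)]
      simp_rw [hfeq]
      rw [Set.indicator_of_notMem hu, integral_zero]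
  simp_rw [hinner1, hinner2] at hswap
  rw [integral_indicator measurableSet_Ioi, integral_indicator measurableSet_Ioi] at hswap
  -- rewrite the right side : ∫ in Ici u = F - G u for u > t
  have hsplit : ∀ u ∈ Set.Ioi t, (∫ x in Set.Ici u, ω x) = F - G u := by
    intro u hu
    rw [integral_Ici_eq_integral_Ioi]
    have hunion : F = G u + ∫ x in Set.Ioi u, ω x := by
      rw [hF, hG, ← setIntegral_union (Set.Ioc_disjoint_Ioi le_rfl) measurableSet_Ioi
        (hint1.mono_set (hIocsub u)) (hωInt.mono_set (Set.Ioi_subset_Ioi (le_of_lt hu))),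
        Set.Ioc_union_Ioi_eq_Ioi (le_of_lt hu)]
    linarith
  have hrhs : (∫ u in Set.Ioi t, (∫ x in Set.Ici u, ω x) * ω u)
      = F * F - ∫ u in Set.Ioi t, G u * ω u := by
    rw [setIntegral_congr_fun measurableSet_Ioi
      (fun u hu => by
        show (∫ x in Set.Ici u, ω x) * ω u = F * ω u - G u * ω u
        rw [hsplit u hu]; ring : Set.EqOn (fun u => (∫ x in Set.Ici u, ω x) * ω u)
        (fun u => F * ω u - G u * ω u) (Set.Ioi t))]
    rw [integral_sub (hωInt.const_mul F) hGωInt, integral_const_mul]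
  rw [hrhs] at hswap
  have hfinal : 2 * (∫ s in Set.Ioi t, G s * ω s) = F ^ 2 := by
    have : (∫ s in Set.Ioi t, G s * ω s) = F * F - ∫ s in Set.Ioi t, G s * ω s := hswap
    nlinarith [this]
  linarith [hstep1]
end
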